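/- Summability of the fixed-point PGD corrections: if 3Mκ < 1, then along any fixed-point PGD sequence one has Σ_{n≥0} ‖r_{n+1}⊗s_{n+1}‖_F² ≤ ‖b − g₀ − Ã(g₀)‖_F² / (1 − 3Mκ); in particular ‖r_n⊗s_n‖_F → 0 as n → ∞. -/

import Mathlib

open Matrix Filter Topology

noncomputable section

/-- The Frobenius inner product `⟨A,B⟩_F = trace(Aᵀ B)` on real `p × q` matrices. -/
def frobInner {p q : ℕ} (A B : Matrix (Fin p) (Fin q) ℝ) : ℝ := (Aᵀ * B).trace

/-- The Frobenius norm. -/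
def frobNorm {p q : ℕ} (A : Matrix (Fin p) (Fin q) ℝ) : ℝ := Real.sqrt (frobInner A A)

/-- The rank-one matrix `r ⊗ s` with entries `(r ⊗ s)_{ij} = r i * s j`. -/
def tensor {p q : ℕ} (r : EuclideanSpace ℝ (Fin p)) (s : EuclideanSpace ℝ (Fin q)) :
    Matrix (Fin p) (Fin q) ℝ := Matrix.of fun i j => r i * s j
/-- The tensorized operator `Ã(g) = Σ_{μ} A_μ g B_μᵀ`. -/
def Atil {p q M : ℕ} (A : Fin M → Matrix (Fin p) (Fin p) ℝ)
    (B : Fin M → Matrix (Fin q) (Fin q) ℝ)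
    (g : Matrix (Fin p) (Fin q) ℝ) : Matrix (Fin p) (Fin q) ℝ :=
  ∑ μ, A μ * g * (B μ)ᵀ

/-!
Write `Rₙ = b - fₙ - Ã(fₙ)` for the residual, `τₙ = ‖rₙ ⊗ sₙ‖` and `xₙ = Rₙ - rₙ ⊗ sₙ`, so that
`Rₙ₊₁ = xₙ - Ã(rₙ ⊗ sₙ)`. Optimality of the best rank-one approximation gives the Pythagoras
identity `‖xₙ‖² = ‖Rₙ‖² - τₙ²` and, because `xₙ` is orthogonal to every `rₙ ⊗ v` and `u ⊗ sₙ`,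
the bound `|⟪xₙ, u ⊗ v⟫| ≤ τₙ ‖u ⊗ v‖` (the second singular value is at most the first). As
`Ã(rₙ ⊗ sₙ)` is a sum of `M` rank-one matrices of norm at most `κ τₙ`, expanding the square gives
`‖Rₙ₊₁‖² ≤ ‖Rₙ‖² - (1 - 3Mκ) τₙ²`, and the claim follows by telescoping.
-/

open RealInnerProductSpace

section InnerProductSpace

variable {G : Type*} [NormedAddCommGroup G] [InnerProductSpace ℝ G]

theorem real_inner_sq_le_of_forall_norm_sq_sub_le {x y : G} {δ : ℝ}
    (h : ∀ c : ℝ, ‖x‖ ^ 2 - δ ≤ ‖x - c • y‖ ^ 2) : ⟪x, y⟫ ^ 2 ≤ δ * ‖y‖ ^ 2 := by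
  rcases eq_or_ne y 0 with rfl | hy
  · simp
  have hy2 : 0 < ‖y‖ ^ 2 := by positivity
  have hc := h (⟪x, y⟫ / ‖y‖ ^ 2)
  rw [norm_sub_sq_real, real_inner_smul_right, norm_smul, mul_pow, Real.norm_eq_abs, sq_abs] at hc
  have hmin : (⟪x, y⟫ / ‖y‖ ^ 2) ^ 2 * ‖y‖ ^ 2 = ⟪x, y⟫ / ‖y‖ ^ 2 * ⟪x, y⟫ := by
    field_simp
  rw [← div_le_iff₀ hy2]
  linarith [show ⟪x, y⟫ / ‖y‖ ^ 2 * ⟪x, y⟫ = ⟪x, y⟫ ^ 2 / ‖y‖ ^ 2 by ring]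

theorem real_inner_eq_zero_of_forall_norm_le_norm_sub_smul {x y : G}
    (h : ∀ c : ℝ, ‖x‖ ≤ ‖x - c • y‖) : ⟪x, y⟫ = 0 := by
  have hsq : ⟪x, y⟫ ^ 2 ≤ 0 * ‖y‖ ^ 2 := real_inner_sq_le_of_forall_norm_sq_sub_le fun c => by
    simpa using pow_le_pow_left₀ (norm_nonneg x) (h c) 2
  exact pow_eq_zero_iff two_ne_zero |>.mp (le_antisymm (by simpa using hsq) (sq_nonneg _))

theorem exists_eq_smul_add_real_inner_eq_zero (u r : G) :
    ∃ (a : ℝ) (u' : G), u = a • r + u' ∧ ⟪u', r⟫ = 0 ∧ ‖u'‖ ≤ ‖u‖ := by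
  set K := ℝ ∙ r
  obtain ⟨a, ha⟩ := Submodule.mem_span_singleton.mp (K.starProjection_apply_mem u)
  set u' := u - K.starProjection u
  have hu : u = a • r + u' := by rw [ha, add_sub_cancel]
  have hu'r : ⟪u', r⟫ = 0 := Submodule.inner_left_of_mem_orthogonal
    (Submodule.mem_span_singleton_self r) (K.sub_starProjection_mem_orthogonal u)
  have hpyth := norm_add_sq_eq_norm_sq_add_norm_sq_real (x := a • r) (y := u')
    (by rw [real_inner_smul_left, real_inner_comm, hu'r, mul_zero])
  refine ⟨a, u', hu, hu'r, ?_⟩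
  rw [← hu] at hpyth
  nlinarith [norm_nonneg u, norm_nonneg u', norm_nonneg (a • r)]

theorem norm_sub_sum_sq_le {ι : Type*} [Fintype ι] (x : G) (W : ι → G) {κ τ : ℝ} (hτ : 0 ≤ τ)
    (hκ : Fintype.card ι * κ ≤ 1) (hW : ∀ i, ‖W i‖ ≤ κ * τ)
    (hxW : ∀ i, |⟪x, W i⟫| ≤ τ * ‖W i‖) :
    ‖x - ∑ i, W i‖ ^ 2 ≤ ‖x‖ ^ 2 + 3 * Fintype.card ι * κ * τ ^ 2 := by
  set S := ∑ i, ‖W i‖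
  have hS : S ≤ Fintype.card ι * κ * τ := by
    calc S ≤ ∑ _i : ι, κ * τ := Finset.sum_le_sum fun i _ => hW i
      _ = Fintype.card ι * κ * τ := by simp [mul_assoc]
  have hinner : -(τ * S) ≤ ⟪x, ∑ i, W i⟫ := by
    rw [inner_sum, Finset.mul_sum, ← Finset.sum_neg_distrib]
    exact Finset.sum_le_sum fun i _ => neg_le_of_abs_le (hxW i)
  have hnorm : ‖∑ i, W i‖ ≤ S := norm_sum_le _ _
  have hSτ : S ≤ τ := hS.trans (by nlinarith)
  rw [norm_sub_sq_real]
  nlinarith [norm_nonneg (∑ i, W i)]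

end InnerProductSpace

section RankOne

variable {E F G : Type*} [NormedAddCommGroup E] [InnerProductSpace ℝ E]
  [NormedAddCommGroup F] [InnerProductSpace ℝ F] [NormedAddCommGroup G] [InnerProductSpace ℝ G]

def IsBestRankOneApprox (t : E →ₗ[ℝ] F →ₗ[ℝ] G) (R : G) (r : E) (s : F) : Prop :=
  ∀ u v, ‖R - t r s‖ ≤ ‖R - t u v‖

namespace IsBestRankOneApprox

variable {t : E →ₗ[ℝ] F →ₗ[ℝ] G} {R : G} {r : E} {s : F}

theorem inner_sub_apply_left_eq_zero (h : IsBestRankOneApprox t R r s) (v : F) :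
    ⟪R - t r s, t r v⟫ = 0 :=
  real_inner_eq_zero_of_forall_norm_le_norm_sub_smul fun c => by
    simpa [sub_sub] using h r (s + c • v)

theorem inner_sub_apply_right_eq_zero (h : IsBestRankOneApprox t R r s) (u : E) :
    ⟪R - t r s, t u s⟫ = 0 :=
  real_inner_eq_zero_of_forall_norm_le_norm_sub_smul fun c => by
    simpa [sub_sub] using h (r + c • u) s

theorem norm_sub_sq (h : IsBestRankOneApprox t R r s) :
    ‖R - t r s‖ ^ 2 = ‖R‖ ^ 2 - ‖t r s‖ ^ 2 := by
  have := norm_add_sq_real (R - t r s) (t r s)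
  rw [sub_add_cancel, h.inner_sub_apply_left_eq_zero s] at this
  linarith

theorem abs_inner_le (h : IsBestRankOneApprox t R r s) (u : E) (v : F) :
    |⟪R, t u v⟫| ≤ ‖t r s‖ * ‖t u v‖ := by
  have hsq : ⟪R, t u v⟫ ^ 2 ≤ ‖t r s‖ ^ 2 * ‖t u v‖ ^ 2 :=
    real_inner_sq_le_of_forall_norm_sq_sub_le fun c => by
      rw [← h.norm_sub_sq, ← map_smul]
      exact pow_le_pow_left₀ (norm_nonneg _) (h u (c • v)) 2
  rw [← mul_pow] at hsq
  simpa [abs_of_nonneg (by positivity : 0 ≤ ‖t r s‖ * ‖t u v‖)] using sq_le_sq.mp hsq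

theorem abs_inner_sub_le (h : IsBestRankOneApprox t R r s)
    (ht : ∀ a b c d, ⟪t a b, t c d⟫ = ⟪a, c⟫ * ⟪b, d⟫) (u : E) (v : F) :
    |⟪R - t r s, t u v⟫| ≤ ‖t r s‖ * ‖t u v‖ := by
  have hnorm : ∀ a b, ‖t a b‖ = ‖a‖ * ‖b‖ := fun a b => by
    rw [norm_eq_sqrt_real_inner, ht, real_inner_self_eq_norm_sq, real_inner_self_eq_norm_sq,
      ← mul_pow, Real.sqrt_sq (by positivity)]
  -- split off the components along `r` and `s`, which the residual does not see
  obtain ⟨a, u', rfl, hu'r, hu'⟩ := exists_eq_smul_add_real_inner_eq_zero u r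
  obtain ⟨b, v', rfl, hv's, hv'⟩ := exists_eq_smul_add_real_inner_eq_zero v s
  have hreduce : ⟪R - t r s, t (a • r + u') (b • s + v')⟫ = ⟪R, t u' v'⟫ := by
    simp only [map_add, map_smul, LinearMap.add_apply, LinearMap.smul_apply, inner_add_right,
      real_inner_smul_right, h.inner_sub_apply_left_eq_zero, h.inner_sub_apply_right_eq_zero,
      mul_zero, zero_add]
    rw [inner_sub_left, ht, real_inner_comm u', hu'r, zero_mul, sub_zero]
  calc |⟪R - t r s, t (a • r + u') (b • s + v')⟫| = |⟪R, t u' v'⟫| := by rw [hreduce]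
    _ ≤ ‖t r s‖ * ‖t u' v'‖ := h.abs_inner_le u' v'
    _ ≤ ‖t r s‖ * ‖t (a • r + u') (b • s + v')‖ := by
      rw [hnorm u', hnorm (a • r + u')]
      gcongr

theorem norm_sub_sub_sum_sq_le (h : IsBestRankOneApprox t R r s)
    (ht : ∀ a b c d, ⟪t a b, t c d⟫ = ⟪a, c⟫ * ⟪b, d⟫) {ι : Type*} [Fintype ι]
    (u : ι → E) (v : ι → F) {κ : ℝ} (hκ : Fintype.card ι * κ ≤ 1)
    (huv : ∀ i, ‖t (u i) (v i)‖ ≤ κ * ‖t r s‖) :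
    ‖R - t r s - ∑ i, t (u i) (v i)‖ ^ 2
      ≤ ‖R‖ ^ 2 - (1 - 3 * Fintype.card ι * κ) * ‖t r s‖ ^ 2 := by
  have := norm_sub_sum_sq_le (R - t r s) (fun i => t (u i) (v i)) (norm_nonneg _) hκ huv
    fun i => h.abs_inner_sub_le ht (u i) (v i)
  rw [h.norm_sub_sq] at this
  linarith

end IsBestRankOneApprox

end RankOne

section Matrix

def frobToEuclidean (p q : ℕ) :
    Matrix (Fin p) (Fin q) ℝ →ₗ[ℝ] EuclideanSpace ℝ (Fin p × Fin q) where
  toFun g := WithLp.toLp 2 fun ij => g ij.1 ij.2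
  map_add' _ _ := rfl
  map_smul' _ _ := rfl

@[simp]
theorem frobToEuclidean_apply {p q : ℕ} (g : Matrix (Fin p) (Fin q) ℝ) (ij : Fin p × Fin q) :
    frobToEuclidean p q g ij = g ij.1 ij.2 := rfl

def frobTensor (p q : ℕ) :
    EuclideanSpace ℝ (Fin p) →ₗ[ℝ] EuclideanSpace ℝ (Fin q) →ₗ[ℝ]
      EuclideanSpace ℝ (Fin p × Fin q) :=
  LinearMap.mk₂ ℝ (fun u v => frobToEuclidean p q (tensor u v))
    (fun _ _ _ => by ext; simp [tensor, add_mul])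
    (fun _ _ _ => by ext; simp [tensor, mul_assoc])
    (fun _ _ _ => by ext; simp [tensor, mul_add])
    (fun _ _ _ => by ext; simp [tensor, mul_left_comm])

variable {p q : ℕ}

theorem inner_frobToEuclidean (g h : Matrix (Fin p) (Fin q) ℝ) :
    ⟪frobToEuclidean p q g, frobToEuclidean p q h⟫ = frobInner g h := by
  simp only [frobToEuclidean_apply, PiLp.inner_apply,
    RCLike.inner_apply, conj_trivial, Fintype.sum_prod_type, frobInner, Matrix.trace,
    Matrix.diag, Matrix.mul_apply, Matrix.transpose_apply]
  rw [Finset.sum_comm]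
  exact Finset.sum_congr rfl fun _ _ => Finset.sum_congr rfl fun _ _ => mul_comm _ _

theorem frobNorm_nonneg (g : Matrix (Fin p) (Fin q) ℝ) : 0 ≤ frobNorm g :=
  Real.sqrt_nonneg _

theorem frobNorm_eq_norm (g : Matrix (Fin p) (Fin q) ℝ) :
    frobNorm g = ‖frobToEuclidean p q g‖ := by
  rw [frobNorm, ← inner_frobToEuclidean, real_inner_self_eq_norm_sq, Real.sqrt_sq (norm_nonneg _)]

theorem frobTensor_apply (u : EuclideanSpace ℝ (Fin p)) (v : EuclideanSpace ℝ (Fin q)) :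
    frobTensor p q u v = frobToEuclidean p q (tensor u v) := rfl

theorem inner_frobTensor (a : EuclideanSpace ℝ (Fin p)) (b : EuclideanSpace ℝ (Fin q))
    (c : EuclideanSpace ℝ (Fin p)) (d : EuclideanSpace ℝ (Fin q)) :
    ⟪frobTensor p q a b, frobTensor p q c d⟫ = ⟪a, c⟫ * ⟪b, d⟫ := by
  simp only [frobTensor_apply, frobToEuclidean_apply, tensor,
    PiLp.inner_apply, RCLike.inner_apply, conj_trivial, Matrix.of_apply, Fintype.sum_prod_type,
    Finset.sum_mul_sum]
  exact Finset.sum_congr rfl fun _ _ => Finset.sum_congr rfl fun _ _ => by ring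

theorem mul_tensor_mul_transpose (C : Matrix (Fin p) (Fin p) ℝ) (D : Matrix (Fin q) (Fin q) ℝ)
    (u : EuclideanSpace ℝ (Fin p)) (v : EuclideanSpace ℝ (Fin q)) :
    C * tensor u v * Dᵀ = tensor (WithLp.toLp 2 (C *ᵥ u)) (WithLp.toLp 2 (D *ᵥ v)) := by
  change C * vecMulVec u v * Dᵀ = vecMulVec (C *ᵥ u) (D *ᵥ v)
  rw [mul_vecMulVec, vecMulVec_mul, vecMul_transpose]

variable {M : ℕ} (A : Fin M → Matrix (Fin p) (Fin p) ℝ) (B : Fin M → Matrix (Fin q) (Fin q) ℝ)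

theorem Atil_add (g h : Matrix (Fin p) (Fin q) ℝ) : Atil A B (g + h) = Atil A B g + Atil A B h := by
  simp only [Atil, Matrix.mul_add, Matrix.add_mul, Finset.sum_add_distrib]

theorem frobNorm_sub_tensor_sub_Atil_sq_le {κ : ℝ}
    (hκ : ∀ (μ : Fin M) (g : Matrix (Fin p) (Fin q) ℝ),
      frobNorm (A μ * g * (B μ)ᵀ) ≤ κ * frobNorm g)
    (hMκ : M * κ ≤ 1)
    {R : Matrix (Fin p) (Fin q) ℝ} {r : EuclideanSpace ℝ (Fin p)} {s : EuclideanSpace ℝ (Fin q)}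
    (hbest : ∀ u v, frobNorm (R - tensor r s) ≤ frobNorm (R - tensor u v)) :
    frobNorm (R - tensor r s - Atil A B (tensor r s)) ^ 2
      ≤ frobNorm R ^ 2 - (1 - 3 * M * κ) * frobNorm (tensor r s) ^ 2 := by
  have h : IsBestRankOneApprox (frobTensor p q) (frobToEuclidean p q R) r s := fun u v => by
    simpa only [frobNorm_eq_norm, map_sub, frobTensor_apply] using hbest u v
  have hAtil : frobToEuclidean p q (Atil A B (tensor r s))
      = ∑ μ, frobTensor p q (WithLp.toLp 2 (A μ *ᵥ r)) (WithLp.toLp 2 (B μ *ᵥ s)) := by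
    simp only [Atil, map_sum, mul_tensor_mul_transpose, frobTensor_apply]
  have := h.norm_sub_sub_sum_sq_le inner_frobTensor (fun μ => WithLp.toLp 2 (A μ *ᵥ r))
    (fun μ => WithLp.toLp 2 (B μ *ᵥ s)) (by simpa using hMκ) fun μ => by
      simpa only [frobTensor_apply, ← frobNorm_eq_norm, mul_tensor_mul_transpose] using
        hκ μ (tensor r s)
  simpa only [frobNorm_eq_norm, map_sub, hAtil, Fintype.card_fin, frobTensor_apply] using this

end Matrix

theorem summable_and_tsum_le_of_le_sub_mul {e d : ℕ → ℝ} {c : ℝ} (hc : 0 < c)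
    (he : ∀ n, 0 ≤ e n) (hd : ∀ n, 0 ≤ d n) (h : ∀ n, e (n + 1) ≤ e n - c * d n) :
    Summable d ∧ ∑' n, d n ≤ e 0 / c := by
  have htelescope : ∀ N, c * ∑ n ∈ Finset.range N, d n ≤ e 0 - e N := by
    intro N
    induction N with
    | zero => simp
    | succ N ih => rw [Finset.sum_range_succ, mul_add]; linarith [h N]
  have hpartial : ∀ N, ∑ n ∈ Finset.range N, d n ≤ e 0 / c := fun N => by
    rw [le_div_iff₀' hc]
    linarith [htelescope N, he N]
  exact ⟨summable_of_sum_range_le hd hpartial, Real.tsum_le_of_sum_range_le hd hpartial⟩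

theorem stmt_12_general {p q M : ℕ}
    (A : Fin M → Matrix (Fin p) (Fin p) ℝ) (B : Fin M → Matrix (Fin q) (Fin q) ℝ)
    (κ : ℝ)
    (hκ : ∀ (μ : Fin M) (g : Matrix (Fin p) (Fin q) ℝ),
      frobNorm (A μ * g * (B μ)ᵀ) ≤ κ * frobNorm g)
    (hcond : 3 * M * κ < 1)
    (b g₀ : Matrix (Fin p) (Fin q) ℝ)
    (f : ℕ → Matrix (Fin p) (Fin q) ℝ)
    (r : ℕ → EuclideanSpace ℝ (Fin p)) (s : ℕ → EuclideanSpace ℝ (Fin q))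
    (hf0 : f 0 = g₀)
    (hstep : ∀ n, f (n + 1) = f n + tensor (r n) (s n))
    (hbest : ∀ (n : ℕ) (u : EuclideanSpace ℝ (Fin p)) (v : EuclideanSpace ℝ (Fin q)),
      frobNorm ((b - f n - Atil A B (f n)) - tensor (r n) (s n))
        ≤ frobNorm ((b - f n - Atil A B (f n)) - tensor u v)) :
    Summable (fun n => frobNorm (tensor (r n) (s n)) ^ 2) ∧
    (∑' n, frobNorm (tensor (r n) (s n)) ^ 2)
      ≤ frobNorm (b - g₀ - Atil A B g₀) ^ 2 / (1 - 3 * M * κ) ∧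
    Tendsto (fun n => frobNorm (tensor (r n) (s n))) atTop (𝓝 0) := by
  set res := fun n => b - f n - Atil A B (f n)
  have hres : ∀ n, res (n + 1) = res n - tensor (r n) (s n) - Atil A B (tensor (r n) (s n)) :=
    fun n => by simp only [res, hstep, Atil_add]; abel
  have hdecay : ∀ n, frobNorm (res (n + 1)) ^ 2
      ≤ frobNorm (res n) ^ 2 - (1 - 3 * M * κ) * frobNorm (tensor (r n) (s n)) ^ 2 := fun n => by
    rw [hres]
    exact frobNorm_sub_tensor_sub_Atil_sq_le A B hκ (by linarith) (hbest n)
  obtain ⟨hsum, htsum⟩ := summable_and_tsum_le_of_le_sub_mul (e := fun n => frobNorm (res n) ^ 2)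
    (sub_pos.2 hcond) (fun _ => sq_nonneg _) (fun _ => sq_nonneg _) hdecay
  refine ⟨hsum, by simpa only [res, hf0] using htsum, ?_⟩
  simpa only [Real.sqrt_sq (frobNorm_nonneg _), Real.sqrt_zero] using
    hsum.tendsto_atTop_zero.sqrt

/-- Summability of the fixed-point PGD corrections: if `3Mκ < 1`, then
`Σ_n ‖r_{n+1}⊗s_{n+1}‖² ≤ ‖b − g₀ − Ã(g₀)‖² / (1 − 3Mκ)`; in particular
`‖r_n⊗s_n‖ → 0`. -/
theorem stmt_12 {p q M : ℕ} (hp : 1 ≤ p) (hq : 1 ≤ q) (hM : 1 ≤ M)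
    (A : Fin M → Matrix (Fin p) (Fin p) ℝ) (B : Fin M → Matrix (Fin q) (Fin q) ℝ)
    (κ : ℝ) (hκ0 : 0 ≤ κ)
    (hκ : ∀ (μ : Fin M) (g : Matrix (Fin p) (Fin q) ℝ),
      frobNorm (A μ * g * (B μ)ᵀ) ≤ κ * frobNorm g)
    (hcond : 3 * M * κ < 1)
    (b g₀ : Matrix (Fin p) (Fin q) ℝ)
    (f : ℕ → Matrix (Fin p) (Fin q) ℝ)
    (r : ℕ → EuclideanSpace ℝ (Fin p)) (s : ℕ → EuclideanSpace ℝ (Fin q))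
    (hf0 : f 0 = g₀)
    (hstep : ∀ n, f (n + 1) = f n + tensor (r n) (s n))
    (hbest : ∀ (n : ℕ) (u : EuclideanSpace ℝ (Fin p)) (v : EuclideanSpace ℝ (Fin q)),
      frobNorm ((b - f n - Atil A B (f n)) - tensor (r n) (s n))
        ≤ frobNorm ((b - f n - Atil A B (f n)) - tensor u v)) :
    Summable (fun n => frobNorm (tensor (r n) (s n)) ^ 2) ∧
    (∑' n, frobNorm (tensor (r n) (s n)) ^ 2)
      ≤ frobNorm (b - g₀ - Atil A B g₀) ^ 2 / (1 - 3 * M * κ) ∧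
    Tendsto (fun n => frobNorm (tensor (r n) (s n))) atTop (𝓝 0) :=
  stmt_12_general A B κ hκ hcond b g₀ f r s hf0 hstep hbest

end
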